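/- arXiv:2102.02631 — 3 statements merged into one kernel-verified Lean document; each statement's English description precedes it below -/
import Mathlib

section
/- For every dimension d ≥ 1, every function f : {−1,1}^d → ℝ, and every ε > 0, there exists a fully connected binarized neural network with one hidden layer whose output function O satisfies sup_{x ∈ {−1,1}^d} |O(x) − f(x)| < ε. -/
/-- The binarized activation function with threshold `θ`:
`σ θ t = 1` if `t > θ`, and `-1` otherwise. -/
noncomputable def binAct (θ t : ℝ) : ℝ := if t > θ then 1 else -1

/-!
On the sign cube `{±1}^ι` one has `⟨y, x⟩ = |ι| - 2 · #{i | y i ≠ x i}`, so the neuron with weights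
`y` and threshold `|ι| - 1` fires exactly at `x = y`, while the one with threshold `|ι|` never
fires. With output weights `f y / 2` and `-f y / 2` this pair contributes `f y` at `y` and `0`
elsewhere; summing over all patterns `y` represents `f` exactly on the cube.
-/

open Finset

noncomputable def bnnOutput {ι κ : Type*} [Fintype ι] [Fintype κ] (W : ι → κ → ℝ)
    (θ v : κ → ℝ) (x : ι → ℝ) : ℝ :=
  ∑ j, v j * binAct (θ j) (∑ i, W i j * x i)

theorem bnnOutput_comp_equiv {ι κ κ' : Type*} [Fintype ι] [Fintype κ] [Fintype κ']
    (e : κ' ≃ κ) (W : ι → κ → ℝ) (θ v : κ → ℝ) (x : ι → ℝ) :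
    bnnOutput (fun i => W i ∘ e) (θ ∘ e) (v ∘ e) x = bnnOutput W θ v x :=
  e.sum_comp fun j => v j * binAct (θ j) (∑ i, W i j * x i)

section SignCube

variable {ι : Type*} [Fintype ι] [DecidableEq ι] {x y : ι → ℝ}

variable (ι) in
noncomputable def signCube : Finset (ι → ℝ) :=
  Fintype.piFinset fun _ => {1, -1}

theorem mem_signCube : x ∈ signCube ι ↔ ∀ i, x i = 1 ∨ x i = -1 := by
  simp [signCube]

theorem sum_mul_eq_card_sub_two_mul_card_ne (hx : x ∈ signCube ι) (hy : y ∈ signCube ι) :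
    ∑ i, y i * x i = Fintype.card ι - 2 * #{i | y i ≠ x i} := by
  have hterm : ∀ i, y i * x i = 1 - 2 * if y i ≠ x i then 1 else 0 := fun i => by
    rcases mem_signCube.1 hy i with h | h <;> rcases mem_signCube.1 hx i with h' | h' <;>
      norm_num [h, h']
  simp only [hterm, sum_sub_distrib, ← mul_sum, sum_boole, sum_const, card_univ, nsmul_eq_mul,
    mul_one]

theorem binAct_card_sub_one_sum_mul_eq_ite (hx : x ∈ signCube ι) (hy : y ∈ signCube ι) :
    binAct (Fintype.card ι - 1) (∑ i, y i * x i) = if y = x then 1 else -1 := by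
  rw [sum_mul_eq_card_sub_two_mul_card_ne hx hy, binAct]
  by_cases hyx : y = x
  · simp [hyx]
  · obtain ⟨i, hi⟩ := Function.ne_iff.1 hyx
    have : (1 : ℝ) ≤ #{i | y i ≠ x i} := by
      exact_mod_cast card_pos.2 ⟨i, mem_filter.2 ⟨mem_univ i, hi⟩⟩
    rw [if_neg (by linarith), if_neg hyx]

theorem binAct_card_sum_mul_eq_neg_one (hx : x ∈ signCube ι) (hy : y ∈ signCube ι) :
    binAct (Fintype.card ι) (∑ i, y i * x i) = -1 := by
  rw [sum_mul_eq_card_sub_two_mul_card_ne hx hy, binAct, if_neg]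
  have : (0 : ℝ) ≤ #{i | y i ≠ x i} := Nat.cast_nonneg _
  linarith

theorem bnnOutput_pattern_eq (f : (ι → ℝ) → ℝ) (hx : x ∈ signCube ι) :
    bnnOutput (fun i (j : Bool × signCube ι) => (j.2 : ι → ℝ) i)
      (fun j => if j.1 then Fintype.card ι - 1 else Fintype.card ι)
      (fun j => if j.1 then f j.2 / 2 else -(f j.2 / 2)) x = f x := by
  have hpair : ∀ y : signCube ι,
      f y / 2 * binAct (Fintype.card ι - 1) (∑ i, (y : ι → ℝ) i * x i)
        + -(f y / 2) * binAct (Fintype.card ι) (∑ i, (y : ι → ℝ) i * x i)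
        = if (y : ι → ℝ) = x then f y else 0 := fun y => by
    rw [binAct_card_sub_one_sum_mul_eq_ite hx y.2, binAct_card_sum_mul_eq_neg_one hx y.2]
    split_ifs <;> ring
  simp only [bnnOutput, Fintype.sum_prod_type_right, Fintype.sum_bool, if_true,
    Bool.false_eq_true, if_false, hpair]
  rw [sum_coe_sort (signCube ι) fun y => if y = x then f y else 0, sum_ite_eq' _ _ _, if_pos hx]

theorem exists_binary_bnnOutput_eq_on_signCube (f : (ι → ℝ) → ℝ) :
    ∃ (n : ℕ) (W : ι → Fin n → ℝ) (θ v : Fin n → ℝ),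
      (∀ i j, W i j = 1 ∨ W i j = -1) ∧ ∀ x ∈ signCube ι, bnnOutput W θ v x = f x := by
  let e := (Fintype.equivFin (Bool × signCube ι)).symm
  refine ⟨_, _, _, _, ?_, fun x hx =>
    (bnnOutput_comp_equiv e _ _ _ x).trans (bnnOutput_pattern_eq f hx)⟩
  exact fun i j => mem_signCube.1 (e j).2.2 i

end SignCube

theorem bnn_one_hidden_layer_universal_approx_binary_inputs_general
    (d : ℕ) (f : (Fin d → ℝ) → ℝ) (ε : ℝ) (hε : 0 < ε) :
    ∃ (n : ℕ) (W : Fin d → Fin n → ℝ) (θ : Fin n → ℝ) (v : Fin n → ℝ),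
      (∀ i j, W i j = 1 ∨ W i j = -1) ∧
      ∀ x : Fin d → ℝ, (∀ i, x i = 1 ∨ x i = -1) →
        |(∑ j, v j * binAct (θ j) (∑ i, W i j * x i)) - f x| < ε := by
  obtain ⟨n, W, θ, v, hW, hO⟩ := exists_binary_bnnOutput_eq_on_signCube f
  refine ⟨n, W, θ, v, hW, fun x hx => ?_⟩
  rw [← bnnOutput, hO x (mem_signCube.2 hx), sub_self, abs_zero]
  exact hε

/-- **Universal approximation for single-hidden-layer fully connected BNNs on binary inputs.**
For every dimension `d ≥ 1`, every function `f : {−1,1}^d → ℝ`, and every `ε > 0`, there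
is a single-hidden-layer fully connected BNN (binary hidden weights `W`, thresholds `θ`,
real output weights `v`) whose output `O x = ∑ j, v j * σ_{θ j} (∑ i, W i j * x i)`
satisfies `|O x − f x| < ε` for all `x ∈ {−1,1}^d`. -/
theorem bnn_one_hidden_layer_universal_approx_binary_inputs
    (d : ℕ) (hd : 1 ≤ d) (f : (Fin d → ℝ) → ℝ) (ε : ℝ) (hε : 0 < ε) :
    ∃ (n : ℕ) (W : Fin d → Fin n → ℝ) (θ : Fin n → ℝ) (v : Fin n → ℝ),
      (∀ i j, W i j = 1 ∨ W i j = -1) ∧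
      ∀ x : Fin d → ℝ, (∀ i, x i = 1 ∨ x i = -1) →
        |(∑ j, v j * binAct (θ j) (∑ i, W i j * x i)) - f x| < ε :=
  bnn_one_hidden_layer_universal_approx_binary_inputs_general d f ε hε
end

section
/- Let O be the output function of any fully connected binarized neural network with one hidden layer and input dimension d = 2. Then O(1,0) + O(−1,0) = O(0,1) + O(0,−1). -/
theorem apply_add_apply_neg_eq_of_eq_one_or_eq_neg_one {R M : Type*} [InvolutiveNeg R] [One R]
    [AddCommMagma M] (f : R → M) {s : R} (hs : s = 1 ∨ s = -1) :
    f s + f (-s) = f 1 + f (-1) := by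
  rcases hs with rfl | rfl
  · rfl
  · rw [neg_neg, add_comm]

/-- For the output function `O` of any fully connected single-hidden-layer BNN with
input dimension `d = 2` (binary hidden weights `W`, thresholds `θ`, real output
weights `v`), one has `O(1,0) + O(−1,0) = O(0,1) + O(0,−1)`. -/
theorem bnn_one_hidden_layer_critical_points_identity
    (n : ℕ) (W : Fin 2 → Fin n → ℝ) (θ : Fin n → ℝ) (v : Fin n → ℝ)
    (hW : ∀ i j, W i j = 1 ∨ W i j = -1)
    (O : (Fin 2 → ℝ) → ℝ)
    (hO : ∀ x, O x = ∑ j, v j * binAct (θ j) (∑ i, W i j * x i)) :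
    O ![1, 0] + O ![-1, 0] = O ![0, 1] + O ![0, -1] := by
  simp only [hO, ← Finset.sum_add_distrib, ← mul_add]
  refine Finset.sum_congr rfl fun j _ => congrArg (v j * ·) ?_
  simp only [Fin.sum_univ_two, Matrix.cons_val_zero, Matrix.cons_val_one,
    mul_one, mul_zero, mul_neg, add_zero, zero_add]
  rw [apply_add_apply_neg_eq_of_eq_one_or_eq_neg_one _ (hW 0 j),
    apply_add_apply_neg_eq_of_eq_one_or_eq_neg_one _ (hW 1 j)]
end

section
/- Let X ⊆ ℝ^d be a compact set and let f : X → ℝ be Lipschitz continuous, i.e., there exists λ ∈ ℝ such that |f(x) − f(y)| ≤ λ · ‖x − y‖ for all x, y ∈ X. Then for every ε > 0 there exists a fully connected binarized neural network with two hidden layers whose output function O satisfies sup_{x ∈ X} |O(x) − f(x)| < ε. -/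
open Finset

noncomputable def boolSign (b : Bool) : ℝ := if b then 1 else -1

lemma binAct_eq_boolSign (θ t : ℝ) : binAct θ t = boolSign (decide (θ < t)) := by
  by_cases h : θ < t <;> simp [binAct, boolSign, h]

lemma boolSign_mul_boolSign (a b : Bool) :
    boolSign a * boolSign b = if a = b then 1 else -1 := by
  cases a <;> cases b <;> norm_num [boolSign]

lemma boolSign_eq_one_or_eq_neg_one (b : Bool) : boolSign b = 1 ∨ boolSign b = -1 := by
  cases b <;> simp [boolSign]

def IsBinary {ι κ : Type*} (W : ι → κ → ℝ) : Prop := ∀ i k, W i k = 1 ∨ W i k = -1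

noncomputable def actPattern {ι κ : Type*} [Fintype ι] (W : ι → κ → ℝ) (θ : κ → ℝ)
    (x : ι → ℝ) (k : κ) : Bool :=
  decide (θ k < ∑ i, W i k * x i)

section SecondLayer

variable {ι : Type*} [Fintype ι]

lemma sum_boolSign_mul_boolSign (p q : ι → Bool) :
    ∑ j, boolSign (p j) * boolSign (q j) = Fintype.card ι - 2 * #{j | p j ≠ q j} := by
  classical
  have h (j : ι) : boolSign (p j) * boolSign (q j) = 1 - 2 * if p j ≠ q j then 1 else 0 := by
    rw [boolSign_mul_boolSign]
    by_cases hj : p j = q j <;> simp [hj]; norm_num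
  rw [sum_congr rfl fun j _ => h j, sum_sub_distrib, ← mul_sum, sum_boole]
  simp

lemma binAct_sum_boolSign_mul_boolSign (p q : ι → Bool) :
    binAct (Fintype.card ι - 1) (∑ j, boolSign (p j) * boolSign (q j)) =
      if p = q then 1 else -1 := by
  rw [sum_boolSign_mul_boolSign, binAct]
  by_cases hpq : p = q
  · simp [hpq]
  · obtain ⟨j, hj⟩ := Function.ne_iff.1 hpq
    have : (1 : ℝ) ≤ #{j | p j ≠ q j} := by
      exact_mod_cast card_pos.2 ⟨j, by simp [hj]⟩
    rw [if_neg hpq, if_neg (by linarith)]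

lemma binAct_sum_boolSign (q : ι → Bool) :
    binAct (-(Fintype.card ι + 1)) (∑ j, boolSign (q j)) = 1 := by
  have : -(Fintype.card ι : ℝ) ≤ ∑ j, boolSign (q j) := by
    simpa using card_nsmul_le_sum univ (fun j => boolSign (q j)) (-1)
      fun j _ => by cases q j <;> norm_num [boolSign]
  rw [binAct, if_pos (by linarith)]

lemma exists_binary_layer_sum_eq (g : (ι → Bool) → ℝ) :
    ∃ (n : ℕ) (W : ι → Fin n → ℝ) (θ v : Fin n → ℝ), IsBinary W ∧
      ∀ q : ι → Bool, ∑ k, v k * binAct (θ k) (∑ j, W j k * boolSign (q j)) = g q := by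
  classical
  let e := (Fintype.equivFin (Option (ι → Bool))).symm
  -- the neuron `none` always fires; the neuron `some p` fires exactly on the input pattern `p`
  let W : ι → Option (ι → Bool) → ℝ := fun j k => k.elim 1 fun p => boolSign (p j)
  let θ : Option (ι → Bool) → ℝ := fun k =>
    k.elim (-(Fintype.card ι + 1)) fun _ => Fintype.card ι - 1
  let v : Option (ι → Bool) → ℝ := fun k => k.elim ((∑ p, g p) / 2) fun p => g p / 2
  have hW : IsBinary W := by
    rintro j (_ | p)
    · exact .inl rfl
    · exact boolSign_eq_one_or_eq_neg_one (p j)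
  refine ⟨_, fun j k => W j (e k), θ ∘ e, v ∘ e, fun j k => hW j (e k), fun q => ?_⟩
  have hsel (p : ι → Bool) : g p / 2 * (if p = q then 1 else -1) =
      (if p = q then g p else 0) - g p / 2 := by
    split_ifs <;> ring
  change ∑ k, v (e k) * binAct (θ (e k)) (∑ j, W j (e k) * boolSign (q j)) = g q
  rw [e.sum_comp fun k => v k * binAct (θ k) (∑ j, W j k * boolSign (q j)),
    Fintype.sum_option]
  simp only [W, θ, v, Option.elim_none, Option.elim_some, one_mul, binAct_sum_boolSign,
    binAct_sum_boolSign_mul_boolSign, hsel, sum_sub_distrib, sum_ite_eq', mem_univ, if_true,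
    ← sum_div]
  ring

end SecondLayer

lemma abs_sub_le_of_forall_lt_iff_lt {δ A B : ℝ} {K : ℤ} (hδ : 0 < δ)
    (hA : |A| ≤ K * δ) (hB : |B| ≤ K * δ)
    (h : ∀ m ∈ Icc (-K) K, ((m : ℝ) * δ < A ↔ (m : ℝ) * δ < B)) : |A - B| ≤ δ := by
  wlog hAB : A ≤ B generalizing A B
  · rw [abs_sub_comm]
    exact this hB hA (fun m hm => (h m hm).symm) (by linarith)
  rw [abs_sub_comm, abs_of_nonneg (by linarith)]
  by_contra! hgap
  -- the first grid point at or above `A` lies strictly below `B`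
  set m := ⌈A / δ⌉
  have hAm : A ≤ m * δ := (div_le_iff₀ hδ).1 (Int.le_ceil _)
  have hmA : m * δ < A + δ := by
    have := mul_lt_mul_of_pos_right (Int.ceil_lt_add_one (A / δ)) hδ
    rwa [add_mul, div_mul_cancel₀ _ hδ.ne', one_mul] at this
  have hm : m ∈ Icc (-K) K := by
    rw [abs_le] at hA
    refine mem_Icc.2 ⟨?_, Int.ceil_le.2 ((div_le_iff₀ hδ).2 hA.2)⟩
    have : ((-K : ℤ) : ℝ) ≤ A / δ := by
      rw [le_div_iff₀ hδ]; push_cast; linarith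
    exact_mod_cast this.trans (Int.le_ceil _)
  exact not_lt.2 hAm ((h m hm).2 (by linarith))

section FirstLayer

variable {d : ℕ}

def flipSign (a : Option (Fin d)) (i : Fin d) : ℝ := if a = some i then -1 else 1

lemma sum_flipSign_none_sub_some (x : Fin d → ℝ) (i : Fin d) :
    ∑ k, flipSign none k * x k - ∑ k, flipSign (some i) k * x k = 2 * x i := by
  rw [← sum_sub_distrib]
  have h (k : Fin d) : flipSign none k * x k - flipSign (some i) k * x k =
      if i = k then 2 * x k else 0 := by
    by_cases hk : i = k
    · simp [flipSign, hk]; ring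
    · simp [flipSign, hk]
  simp [h]

lemma abs_sum_flipSign_mul_le (a : Option (Fin d)) (x : Fin d → ℝ) :
    |∑ k, flipSign a k * x k| ≤ ∑ k, |x k| :=
  (abs_sum_le_sum_abs _ _).trans_eq <| sum_congr rfl fun k _ => by
    by_cases h : a = some k <;> simp [flipSign, h]

lemma abs_sub_le_of_forall_abs_sum_flipSign_sub_le {x y : Fin d → ℝ} {η : ℝ}
    (h : ∀ a, |∑ k, flipSign a k * x k - ∑ k, flipSign a k * y k| ≤ η) (i : Fin d) :
    |x i - y i| ≤ η := by
  have hx := sum_flipSign_none_sub_some x i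
  have hy := sum_flipSign_none_sub_some y i
  have h₀ := h none
  have hi := h (some i)
  rw [abs_le] at h₀ hi ⊢
  constructor <;> linarith

lemma exists_binary_layer_dist_le {X : Set (EuclideanSpace ℝ (Fin d))}
    (hX : Bornology.IsBounded X) {δ : ℝ} (hδ : 0 < δ) :
    ∃ (n : ℕ) (W : Fin d → Fin n → ℝ) (θ : Fin n → ℝ), IsBinary W ∧
      ∀ x ∈ X, ∀ y ∈ X, actPattern W θ x = actPattern W θ y → dist x y ≤ δ := by
  obtain ⟨R, hR⟩ := hX.exists_norm_le
  obtain ⟨C, hC⟩ : ∃ C : NNReal, ∀ x y : EuclideanSpace ℝ (Fin d),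
      dist x y ≤ C * dist x.ofLp y.ofLp :=
    ⟨_, (PiLp.antilipschitzWith_ofLp 2 _).le_mul_dist⟩
  set η := δ / (C + 1)
  have hη : 0 < η := by positivity
  set K : ℤ := ⌈d * R / η⌉
  have hbound (a : Option (Fin d)) (x) (hx : x ∈ X) : |∑ i, flipSign a i * x i| ≤ K * η :=
    calc |∑ i, flipSign a i * x i| ≤ ∑ i, |x i| := abs_sum_flipSign_mul_le a x
      _ ≤ ∑ _i : Fin d, R := sum_le_sum fun i _ => (PiLp.norm_apply_le x i).trans (hR x hx)
      _ = d * R := by simp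
      _ ≤ K * η := (div_le_iff₀ hη).1 (Int.le_ceil _)
  let e := (Fintype.equivFin (Option (Fin d) × Icc (-K) K)).symm
  refine ⟨_, fun i j => flipSign (e j).1 i, fun j => (e j).2 * η, fun i j => ?_,
    fun x hx y hy hxy => ?_⟩
  · by_cases h : (e j).1 = some i <;> simp [flipSign, h]
  have hcoord : ∀ i, dist (x i) (y i) ≤ η :=
    abs_sub_le_of_forall_abs_sum_flipSign_sub_le fun a =>
      abs_sub_le_of_forall_lt_iff_lt hη (hbound a x hx) (hbound a y hy) fun m hm => by
        simpa [actPattern] using congrFun hxy (e.symm (a, ⟨m, hm⟩))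
  calc dist x y ≤ C * dist x.ofLp y.ofLp := hC x y
    _ ≤ (C + 1) * η :=
      mul_le_mul (by linarith) ((dist_pi_le_iff hη.le).2 hcoord) dist_nonneg (by positivity)
    _ = δ := mul_div_cancel₀ _ (by positivity)

end FirstLayer

lemma exists_forall_abs_comp_sub_lt {α β : Type*} {s : Set α} {P : α → β} {f : α → ℝ} {ε : ℝ}
    (h : ∀ x ∈ s, ∀ y ∈ s, P x = P y → |f x - f y| < ε) :
    ∃ g : β → ℝ, ∀ x ∈ s, |g (P x) - f x| < ε := by
  classical
  refine ⟨fun b => if hb : ∃ z ∈ s, P z = b then f hb.choose else 0, fun x hx => ?_⟩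
  have hb : ∃ z ∈ s, P z = P x := ⟨x, hx, rfl⟩
  dsimp only
  rw [dif_pos hb]
  exact h _ hb.choose_spec.1 x hx hb.choose_spec.2

theorem exists_bnn_abs_sub_lt_of_uniformContinuousOn {d : ℕ}
    {X : Set (EuclideanSpace ℝ (Fin d))} (hX : Bornology.IsBounded X)
    {f : EuclideanSpace ℝ (Fin d) → ℝ} (hf : UniformContinuousOn f X) {ε : ℝ} (hε : 0 < ε) :
    ∃ (n₁ n₂ : ℕ) (W₁ : Fin d → Fin n₁ → ℝ) (W₂ : Fin n₁ → Fin n₂ → ℝ)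
      (θ₁ : Fin n₁ → ℝ) (θ₂ : Fin n₂ → ℝ) (v : Fin n₂ → ℝ), IsBinary W₁ ∧ IsBinary W₂ ∧
      ∀ x ∈ X, |(∑ k, v k * binAct (θ₂ k)
        (∑ j, W₂ j k * binAct (θ₁ j) (∑ i, W₁ i j * x i))) - f x| < ε := by
  obtain ⟨δ, hδ, hfδ⟩ := Metric.uniformContinuousOn_iff_le.1 hf (ε / 2) (half_pos hε)
  obtain ⟨n₁, W₁, θ₁, hW₁, hsep⟩ := exists_binary_layer_dist_le hX hδ
  obtain ⟨g, hg⟩ := exists_forall_abs_comp_sub_lt (s := X) (P := fun x => actPattern W₁ θ₁ x)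
    fun x hx y hy hxy => (hfδ x hx y hy (hsep x hx y hy hxy)).trans_lt (half_lt_self hε)
  obtain ⟨n₂, W₂, θ₂, v, hW₂, hv⟩ := exists_binary_layer_sum_eq g
  refine ⟨n₁, n₂, W₁, W₂, θ₁, θ₂, v, hW₁, hW₂, fun x hx => ?_⟩
  have hact (j : Fin n₁) : binAct (θ₁ j) (∑ i, W₁ i j * x i) =
      boolSign (actPattern W₁ θ₁ x j) :=
    binAct_eq_boolSign _ _
  simpa only [hact, hv] using hg x hx

/-- **Universal approximation for two-hidden-layer fully connected BNNs on compact
real input domains.** Let `X ⊆ ℝ^d` be compact and `f : X → ℝ` be Lipschitz, i.e.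
there is `λ` with `|f x − f y| ≤ λ * ‖x − y‖` for `x, y ∈ X` (Euclidean norm). Then
for every `ε > 0` there is a fully connected BNN with two hidden layers (binary weights
`W¹, W²`, thresholds `θ¹, θ²`, real output weights `v`) whose output
`O x = ∑ k, v k * σ_{θ² k} (∑ j, W² j k * σ_{θ¹ j} (∑ i, W¹ i j * x i))`
satisfies `|O x − f x| < ε` for all `x ∈ X`. -/
theorem bnn_two_hidden_layers_universal_approx_compact_lipschitz
    (d : ℕ) (X : Set (EuclideanSpace ℝ (Fin d))) (hX : IsCompact X)
    (f : EuclideanSpace ℝ (Fin d) → ℝ)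
    (hf : ∃ lam : ℝ, ∀ x ∈ X, ∀ y ∈ X, |f x - f y| ≤ lam * ‖x - y‖)
    (ε : ℝ) (hε : 0 < ε) :
    ∃ (n₁ n₂ : ℕ) (W₁ : Fin d → Fin n₁ → ℝ) (W₂ : Fin n₁ → Fin n₂ → ℝ)
      (θ₁ : Fin n₁ → ℝ) (θ₂ : Fin n₂ → ℝ) (v : Fin n₂ → ℝ),
      (∀ i j, W₁ i j = 1 ∨ W₁ i j = -1) ∧
      (∀ j k, W₂ j k = 1 ∨ W₂ j k = -1) ∧
      ∀ x ∈ X,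
        |(∑ k, v k * binAct (θ₂ k)
            (∑ j, W₂ j k * binAct (θ₁ j) (∑ i, W₁ i j * x i))) - f x| < ε := by
  obtain ⟨lam, hlam⟩ := hf
  have hlip : LipschitzOnWith lam.toNNReal f X := .of_dist_le_mul fun x hx y hy => by
    rw [Real.dist_eq, dist_eq_norm]
    exact (hlam x hx y hy).trans (by gcongr; exact lam.le_coe_toNNReal)
  exact exists_bnn_abs_sub_lt_of_uniformContinuousOn hX.isBounded hlip.uniformContinuousOn hε
end
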